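/- arXiv:1712.06660 — 5 statements merged into one kernel-verified Lean document; each statement's English description precedes it below -/
import Mathlib

section
/- Let Δ := Σ_{m=0}^{d} (h_m ⊗ l_m + l_m ⊗ h_m) ∈ A ⊗ A. For α = Σ u_i ⊗ v_i ∈ A ⊗ A and x ∈ A define the correspondence action α_*(x) := Σ_i deg(x·u_i)·v_i ∈ A. Then Δ_*(x) = x for every x ∈ A, i.e. the diagonal class Δ acts as the identity correspondence on A. -/
/-! The classes `h_a` and `l_a` form dual bases of `A` for the pairing `⟨x, y⟩ = deg (x * y)`:
`h_a * l_m` is a multiple of `l_{m-a}`, which has degree one exactly when `m = a`, while products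
of two `h`'s or two `l`'s have degree zero. Expanding `x` in a basis and reading off its
coordinates through a dual basis recovers `x`, and `Δ_*` is exactly that expansion. -/

theorem Module.Basis.sum_apply_smul_eq_self_of_dual {ι R M : Type*} [Fintype ι] [DecidableEq ι]
    [CommSemiring R] [AddCommMonoid M] [Module R M] (b : Module.Basis ι R M) (c : ι → M)
    (B : M →ₗ[R] M →ₗ[R] R) (hB : ∀ j k, B (b j) (c k) = if j = k then 1 else 0) (x : M) :
    ∑ k, B x (c k) • b k = x := by
  have hcoord : ∀ k, B.flip (c k) = b.coord k := fun k =>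
    b.ext fun j => by simp [hB, Finsupp.single_apply]
  calc ∑ k, B x (c k) • b k = ∑ k, b.repr x k • b k := by
        simp_rw [← LinearMap.flip_apply (f := B), hcoord, Module.Basis.coord_apply]
    _ = x := b.sum_repr x

namespace SplitOddQuadric

variable {R A : Type*} [CommSemiring R] [Semiring A] [Module R A]
  {d : ℕ} {h l : ℕ → A} {deg : A →ₗ[R] R}

theorem deg_h_mul_h
    (hmulhh : ∀ a b : ℕ, a ≤ d → b ≤ d → h a * h b = if a + b ≤ d then h (a + b) else 0)
    (hdegh : ∀ a : ℕ, a ≤ d → deg (h a) = 0) {a m : ℕ} (ha : a ≤ d) (hm : m ≤ d) :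
    deg (h a * h m) = 0 := by
  rw [hmulhh a m ha hm]
  split_ifs with hle
  · exact hdegh _ hle
  · exact map_zero deg

theorem deg_h_mul_l
    (hmulhl : ∀ a j : ℕ, a ≤ d → j ≤ d → h a * l j = if a ≤ j then l (j - a) else 0)
    (hdegl0 : deg (l 0) = 1) (hdegl : ∀ j : ℕ, 1 ≤ j → j ≤ d → deg (l j) = 0)
    {a m : ℕ} (ha : a ≤ d) (hm : m ≤ d) :
    deg (h a * l m) = if a = m then 1 else 0 := by
  rw [hmulhl a m ha hm]
  rcases lt_trichotomy a m with hlt | rfl | hgt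
  · rw [if_pos hlt.le, if_neg hlt.ne, hdegl _ (by omega) (by omega)]
  · simp [hdegl0]
  · rw [if_neg (not_le.2 hgt), if_neg hgt.ne', map_zero]

end SplitOddQuadric

theorem diagonal_acts_as_identity_general (d : ℕ)
    (A : Type) [CommRing A] [Algebra (ZMod 2) A]
    (h l : ℕ → A)
    (hmulhh : ∀ a b : ℕ, a ≤ d → b ≤ d → h a * h b = if a + b ≤ d then h (a + b) else 0)
    (hmulhl : ∀ a j : ℕ, a ≤ d → j ≤ d → h a * l j = if a ≤ j then l (j - a) else 0)
    (hmulll : ∀ i j : ℕ, l i * l j = 0)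
    (bA : Module.Basis (Fin (d+1) ⊕ Fin (d+1)) (ZMod 2) A)
    (hbh : ∀ a : Fin (d+1), bA (Sum.inl a) = h a.val)
    (hbl : ∀ a : Fin (d+1), bA (Sum.inr a) = l a.val)
    (deg : A →ₗ[ZMod 2] ZMod 2)
    (hdegl0 : deg (l 0) = 1)
    (hdegh : ∀ a : ℕ, a ≤ d → deg (h a) = 0)
    (hdegl : ∀ j : ℕ, 1 ≤ j → j ≤ d → deg (l j) = 0)
    (x : A) :
    ∑ m ∈ Finset.range (d+1), (deg (x * h m) • l m + deg (x * l m) • h m) = x := by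
  let B := (LinearMap.mul (ZMod 2) A).compr₂ deg
  let dual : Fin (d+1) ⊕ Fin (d+1) → A := Sum.elim (fun a => l a) (fun a => h a)
  have hdual : ∀ j k, B (bA j) (dual k) = if j = k then 1 else 0 := by
    rintro (a | a) (m | m) <;>
      simp only [B, dual, LinearMap.compr₂_apply, LinearMap.mul_apply', hbh, hbl, Sum.elim_inl,
        Sum.elim_inr, Sum.inl.injEq, Sum.inr.injEq, reduceCtorEq, if_false, ← Fin.val_inj]
    · exact SplitOddQuadric.deg_h_mul_l hmulhl hdegl0 hdegl a.is_le m.is_le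
    · exact SplitOddQuadric.deg_h_mul_h hmulhh hdegh a.is_le m.is_le
    · rw [hmulll, map_zero]
    · rw [mul_comm, SplitOddQuadric.deg_h_mul_l hmulhl hdegl0 hdegl m.is_le a.is_le]
      simp only [eq_comm]
  have hsum := bA.sum_apply_smul_eq_self_of_dual dual B hdual x
  rw [Fintype.sum_sum_type] at hsum
  simpa [B, dual, hbh, hbl, Finset.sum_range, Finset.sum_add_distrib, add_comm] using hsum

/-- The diagonal class `Δ = Σ_{m=0}^{d} (h_m ⊗ l_m + l_m ⊗ h_m)` acts as the identity
correspondence on the mod-2 Chow group `A` of a split quadric of odd dimension `2d+1`: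
for every `x ∈ A`, `Δ_*(x) = Σ_m (deg(x·h_m)·l_m + deg(x·l_m)·h_m) = x`. -/
theorem diagonal_acts_as_identity (d : ℕ) (hd : 1 ≤ d)
    (A : Type) [CommRing A] [Algebra (ZMod 2) A]
    (h l : ℕ → A)
    (hh0 : h 0 = 1)
    (hmulhh : ∀ a b : ℕ, a ≤ d → b ≤ d → h a * h b = if a + b ≤ d then h (a + b) else 0)
    (hmulhl : ∀ a j : ℕ, a ≤ d → j ≤ d → h a * l j = if a ≤ j then l (j - a) else 0)
    (hmulll : ∀ i j : ℕ, l i * l j = 0)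
    (bA : Module.Basis (Fin (d+1) ⊕ Fin (d+1)) (ZMod 2) A)
    (hbh : ∀ a : Fin (d+1), bA (Sum.inl a) = h a.val)
    (hbl : ∀ a : Fin (d+1), bA (Sum.inr a) = l a.val)
    (deg : A →ₗ[ZMod 2] ZMod 2)
    (hdegl0 : deg (l 0) = 1)
    (hdegh : ∀ a : ℕ, a ≤ d → deg (h a) = 0)
    (hdegl : ∀ j : ℕ, 1 ≤ j → j ≤ d → deg (l j) = 0)
    (x : A) :
    ∑ m ∈ Finset.range (d+1), (deg (x * h m) • l m + deg (x * l m) • h m) = x :=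
  diagonal_acts_as_identity_general d A h l hmulhh hmulhl hmulll bA hbh hbl deg hdegl0 hdegh hdegl x
end

section
/- For 2 ≤ i ≤ d and 0 ≤ j ≤ i−2, define Δ_{i,j} := sym_{S_{i+1}}((⊗_{k=0}^{i−1} h_k) ⊗ l_j) + Σ_{m=i}^{d} sym_{S_{i+1}}((⊗_{k=0,k≠j}^{i−1} h_k) ⊗ h_m ⊗ l_m) ∈ A^{⊗(i+1)}, and similarly Δ_{i−1,j} ∈ A^{⊗i}. Let σ ∈ S_{i+1} be the cyclic permutation (0 1 ⋯ i). Then Δ_{i,j} = Σ_{r=0}^{i} σ^r·( Δ_{i−1,j} ⊗ h_{i−1} ). -/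
open PiTensorProduct TensorProduct

/-- The permutation action of `Equiv.Perm (Fin m)` on the `m`-fold tensor power over `𝔽₂`,
permuting the tensor factors. -/
noncomputable def permAct (A : Type) [AddCommGroup A] [Module (ZMod 2) A]
    (m : ℕ) (s : Equiv.Perm (Fin m)) :
    (⨂[ZMod 2] _ : Fin m, A) →ₗ[ZMod 2] ⨂[ZMod 2] _ : Fin m, A :=
  (PiTensorProduct.reindex (ZMod 2) (fun _ : Fin m => A) s).toLinearMap

/-- The family `(h_0, …, h_{i-1}, l_j)` of the `i+1` tensor factors of the leading term
of `Δ_{i,j}`. -/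
def uFam (A : Type) (h l : ℕ → A) (i j : ℕ) : Fin (i+1) → A :=
  fun k => if k.val = i then l j else h k.val

/-- The family `(h_0, …, ĥ_j, …, h_{i-1}, h_m, l_m)` (with `h_j` omitted) of the `i+1`
tensor factors of the `m`-th correction term of `Δ_{i,j}`. -/
def wFam (A : Type) (h l : ℕ → A) (i j m : ℕ) : Fin (i+1) → A :=
  fun k =>
    if k.val < i - 1 then (if k.val < j then h k.val else h (k.val + 1))
    else if k.val = i - 1 then h m else l m

/-- The cycle `Δ_{i,j} := sym_{S_{i+1}}((⊗_{k=0}^{i−1} h_k) ⊗ l_j)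
+ Σ_{m=i}^{d} sym_{S_{i+1}}((⊗_{k=0,k≠j}^{i−1} h_k) ⊗ h_m ⊗ l_m)` in `A^{⊗(i+1)}`. -/
noncomputable def DeltaCycle (d : ℕ) (A : Type) [AddCommGroup A] [Module (ZMod 2) A]
    (h l : ℕ → A) (i j : ℕ) : ⨂[ZMod 2] _ : Fin (i+1), A :=
  (∑ s : Equiv.Perm (Fin (i+1)), ⨂ₜ[ZMod 2] k, uFam A h l i j (s k)) +
    ∑ m ∈ Finset.Icc i d, ∑ s : Equiv.Perm (Fin (i+1)), ⨂ₜ[ZMod 2] k, wFam A h l i j m (s k)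

/-!
Every permutation of `Fin (i+1)` factors uniquely as `τ * σ⁻ʳ` with `τ` fixing the last slot
and `0 ≤ r ≤ i`, so applying `Σ_r σʳ` to a sum over the stabilizer of the last slot gives the
full symmetrization over `S_{i+1}`. The families on the right are permutations of those defining
`Δ_{i,j}`, and symmetrization does not see such a permutation. The one extra term `m = i - 1` on
the right contains `h_{i-1}` twice, so its symmetrization vanishes in characteristic 2.
-/

section Symmetrization

variable {R M : Type*} [CommSemiring R] [AddCommMonoid M] [Module R M] {n : ℕ}

variable (R) in
noncomputable def symTprod (v : Fin n → M) : ⨂[R] _ : Fin n, M :=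
  ∑ s : Equiv.Perm (Fin n), ⨂ₜ[R] k, v (s k)

theorem symTprod_comp_perm (v : Fin n → M) (e : Equiv.Perm (Fin n)) :
    symTprod R (fun k => v (e k)) = symTprod R v :=
  Fintype.sum_equiv (Equiv.mulLeft e) _ _ fun _ => rfl

end Symmetrization

theorem symTprod_eq_zero_of_apply_eq {R M : Type*} [CommRing R] [CharP R 2] [AddCommGroup M]
    [Module R M] {n : ℕ} (v : Fin n → M) {a b : Fin n} (hab : a ≠ b)
    (hv : v a = v b) : symTprod R v = 0 := by
  have hswap : ∀ k, v (Equiv.swap a b k) = v k := fun k => by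
    rcases eq_or_ne k a with rfl | hka
    · rw [Equiv.swap_apply_left, hv]
    rcases eq_or_ne k b with rfl | hkb
    · rw [Equiv.swap_apply_right, hv]
    · rw [Equiv.swap_apply_of_ne_of_ne hka hkb]
  refine Finset.sum_involution (fun s _ => Equiv.swap a b * s) (fun s _ => ?_)
    (fun s _ _ hs => hab.symm ?_) (fun _ _ => Finset.mem_univ _)
    (fun s _ => Equiv.swap_mul_self_mul a b s)
  · simp only [Equiv.Perm.mul_apply, hswap]
    rw [← two_smul R, CharTwo.two_eq_zero, zero_smul]
  · simpa using congrArg (fun t => t (s⁻¹ a)) hs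

section FinRotate

open Finset Equiv

open scoped Fin.NatCast

variable {n : ℕ}

theorem finRotate_pow_apply (r : ℕ) (x : Fin (n+1)) : (finRotate (n+1) ^ r) x = x + r := by
  induction r with
  | zero => simp
  | succ r ih => rw [pow_succ', Perm.mul_apply, ih, finRotate_apply, Nat.cast_succ, add_assoc]

theorem sum_stabilizer_mul_finRotate_pow_inv {N : Type*} [AddCommMonoid N]
    (f : Perm (Fin (n+1)) → N) :
    ∑ r ∈ range (n+1),
      ∑ τ ∈ univ.filter (fun τ : Perm (Fin (n+1)) => τ (Fin.last n) = Fin.last n),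
        f (τ * (finRotate (n+1) ^ r)⁻¹) = ∑ s, f s := by
  -- `τ * σ⁻ʳ` sends `last n + r` to `last n`, so `r` is recovered as `s⁻¹ (last n) + 1`
  let index : Perm (Fin (n+1)) → ℕ := fun s => (s⁻¹ (Fin.last n) + 1 : Fin (n+1)).val
  have index_mem (s) : index s ∈ range (n+1) := mem_range.2 (Fin.is_lt _)
  have fixes_last (s : Perm (Fin (n+1))) :
      (s * finRotate (n+1) ^ index s) (Fin.last n) = Fin.last n := by
    rw [Perm.mul_apply, finRotate_pow_apply, Fin.cast_val_eq_self, ← add_assoc,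
      add_comm (Fin.last n), add_assoc, Fin.last_add_one, add_zero]
    exact s.apply_symm_apply _
  have index_mul (r τ) (hr : r < n + 1) (hτ : τ (Fin.last n) = Fin.last n) :
      index (τ * (finRotate (n+1) ^ r)⁻¹) = r := by
    have hτ' : τ⁻¹ (Fin.last n) = Fin.last n := by rw [Perm.inv_eq_iff_eq, hτ]
    simp only [index, mul_inv_rev, inv_inv, Perm.mul_apply, hτ', finRotate_pow_apply]
    rw [add_right_comm, Fin.last_add_one, zero_add, Fin.val_cast_of_lt hr]
  rw [← sum_product']
  refine sum_nbij' (fun p => p.2 * (finRotate (n+1) ^ p.1)⁻¹)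
    (fun s => (index s, s * finRotate (n+1) ^ index s)) (fun _ _ => mem_univ _)
    (fun s _ => mem_product.2 ⟨index_mem s, mem_filter.2 ⟨mem_univ _, fixes_last s⟩⟩) ?_
    (fun s _ => mul_inv_cancel_right _ _) (fun _ _ => rfl)
  rintro ⟨r, τ⟩ hp
  simp only [mem_product, mem_range, mem_filter] at hp
  simp only [index_mul r τ hp.1 hp.2.2, inv_mul_cancel_right]

theorem symTprod_eq_sum_reindex_finRotate_pow {R M : Type*} [CommSemiring R] [AddCommMonoid M]
    [Module R M] (v : Fin (n+1) → M) :
    symTprod R v = ∑ r ∈ range (n+1),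
      ∑ τ ∈ univ.filter (fun τ : Perm (Fin (n+1)) => τ (Fin.last n) = Fin.last n),
        reindex R (fun _ => M) (finRotate (n+1) ^ r) (⨂ₜ[R] k, v (τ k)) := by
  rw [symTprod, ← sum_stabilizer_mul_finRotate_pow_inv]
  simp only [reindex_tprod]
  rfl

end FinRotate

section Families

variable (A : Type) (h l : ℕ → A) {i j : ℕ}

theorem uFam_comp_swap (hi : 1 ≤ i) :
    (fun k => uFam A h l i j (Equiv.swap ⟨i-1, by omega⟩ (Fin.last i) k)) =
      fun t : Fin (i+1) =>
        if t.val < i - 1 then h t.val else if t.val = i - 1 then l j else h (i-1) := by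
  funext k
  grind [uFam]

theorem wFam_comp_swap_mul_swap (hi : 2 ≤ i) (hj : j ≤ i - 2) (m : ℕ) :
    (fun k => wFam A h l i j m ((Equiv.swap (⟨i-2, by omega⟩ : Fin (i+1)) ⟨i-1, by omega⟩ *
        Equiv.swap ⟨i-1, by omega⟩ (Fin.last i)) k)) =
      fun t : Fin (i+1) =>
        if t.val < i - 2 then (if t.val < j then h t.val else h (t.val + 1))
        else if t.val = i - 2 then h m
        else if t.val = i - 1 then l m
        else h (i-1) := by
  funext k
  grind [wFam, Equiv.Perm.mul_apply]

theorem wFam_pred_apply_eq (hi : 2 ≤ i) (hj : j ≤ i - 2) :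
    wFam A h l i j (i-1) ⟨i-2, by omega⟩ = wFam A h l i j (i-1) ⟨i-1, by omega⟩ := by
  grind [wFam]

end Families

theorem Delta_recursion_general (d : ℕ)
    (A : Type) [AddCommGroup A] [Module (ZMod 2) A] (h l : ℕ → A)
    (i j : ℕ) (hi2 : 2 ≤ i) (hj : j ≤ i - 2) :
    DeltaCycle d A h l i j =
      ∑ r ∈ Finset.range (i+1),
        permAct A (i+1) ((finRotate (i+1)) ^ r)
          ((∑ τ ∈ Finset.univ.filter
              (fun τ : Equiv.Perm (Fin (i+1)) => τ (Fin.last i) = Fin.last i),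
            ⨂ₜ[ZMod 2] k, (fun t : Fin (i+1) =>
              if t.val < i - 1 then h t.val
              else if t.val = i - 1 then l j
              else h (i-1)) (τ k)) +
          ∑ m ∈ Finset.Icc (i-1) d,
            ∑ τ ∈ Finset.univ.filter
                (fun τ : Equiv.Perm (Fin (i+1)) => τ (Fin.last i) = Fin.last i),
              ⨂ₜ[ZMod 2] k, (fun t : Fin (i+1) =>
                if t.val < i - 2 then (if t.val < j then h t.val else h (t.val + 1))
                else if t.val = i - 2 then h m
                else if t.val = i - 1 then l m
                else h (i-1)) (τ k)) := by
  let swapLast : Equiv.Perm (Fin (i+1)) := Equiv.swap ⟨i-1, by omega⟩ (Fin.last i)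
  let cycleLastThree : Equiv.Perm (Fin (i+1)) :=
    Equiv.swap ⟨i-2, by omega⟩ ⟨i-1, by omega⟩ * swapLast
  have extend_range : ∑ m ∈ Finset.Icc i d, symTprod (ZMod 2) (wFam A h l i j m) =
      ∑ m ∈ Finset.Icc (i-1) d,
        symTprod (ZMod 2) (fun k => wFam A h l i j m (cycleLastThree k)) := by
    simp only [symTprod_comp_perm]
    refine Finset.sum_subset (Finset.Icc_subset_Icc_left (Nat.sub_le i 1)) fun m hm hm' => ?_
    obtain rfl : m = i - 1 := by simp only [Finset.mem_Icc] at hm hm'; omega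
    exact symTprod_eq_zero_of_apply_eq _ (by simp only [ne_eq, Fin.mk.injEq]; omega)
      (wFam_pred_apply_eq A h l hi2 hj)
  change symTprod (ZMod 2) (uFam A h l i j) +
    ∑ m ∈ Finset.Icc i d, symTprod (ZMod 2) (wFam A h l i j m) = _
  rw [extend_range, ← symTprod_comp_perm _ swapLast, uFam_comp_swap A h l (by omega)]
  simp only [cycleLastThree, swapLast, wFam_comp_swap_mul_swap A h l hi2 hj,
    symTprod_eq_sum_reindex_finRotate_pow, permAct, LinearEquiv.coe_coe, map_add, map_sum,
    Finset.sum_add_distrib]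
  rw [Finset.sum_comm (s := Finset.Icc _ _)]

/-- The recursive identity `Δ_{i,j} = Σ_{r=0}^{i} σ^r·(Δ_{i−1,j} ⊗ h_{i−1})` for the cycles
`Δ_{i,j}` on powers of a split quadric, where `σ` is the cyclic permutation `(0 1 ⋯ i)` and
`Δ_{i−1,j} ⊗ h_{i−1}` is viewed in `A^{⊗(i+1)}` (the partial symmetrizations `sym_{S_i}` being
written as sums over the permutations of `Fin (i+1)` fixing the last slot, which carries
`h_{i−1}`). -/
theorem Delta_recursion (d : ℕ) (hd : 1 ≤ d)
    (A : Type) [AddCommGroup A] [Module (ZMod 2) A] (h l : ℕ → A)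
    (i j : ℕ) (hi2 : 2 ≤ i) (hid : i ≤ d) (hj : j ≤ i - 2) :
    DeltaCycle d A h l i j =
      ∑ r ∈ Finset.range (i+1),
        permAct A (i+1) ((finRotate (i+1)) ^ r)
          ((∑ τ ∈ Finset.univ.filter
              (fun τ : Equiv.Perm (Fin (i+1)) => τ (Fin.last i) = Fin.last i),
            ⨂ₜ[ZMod 2] k, (fun t : Fin (i+1) =>
              if t.val < i - 1 then h t.val
              else if t.val = i - 1 then l j
              else h (i-1)) (τ k)) +
          ∑ m ∈ Finset.Icc (i-1) d,
            ∑ τ ∈ Finset.univ.filter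
                (fun τ : Equiv.Perm (Fin (i+1)) => τ (Fin.last i) = Fin.last i),
              ⨂ₜ[ZMod 2] k, (fun t : Fin (i+1) =>
                if t.val < i - 2 then (if t.val < j then h t.val else h (t.val + 1))
                else if t.val = i - 2 then h m
                else if t.val = i - 1 then l m
                else h (i-1)) (τ k)) :=
  Delta_recursion_general d A h l i j hi2 hj
end

section
/- Define ρ_{2,j} := sym_{S_3}( h_0 ⊗ h_1 ⊗ l_j ) ∈ A^{⊗3} (a sum of 6 terms), and let S¹ : A → A be the linear map with S¹(h_k) = k·h_{k+1} (with h_{d+1} := 0) and S¹(l_j) = (n+1−j)·l_{j−1} (with l_{−1} := 0), coefficients taken mod 2. Let δ* : A^{⊗3} → A^{⊗2} be the linear map a ⊗ b ⊗ c ↦ (a·b) ⊗ c. Then for every 2 ≤ j ≤ d: δ*((S¹ ⊗ Id ⊗ Id)(ρ_{2,j})) = h_2 ⊗ l_j + l_{j−2} ⊗ 1 + (n+1−j)·( l_{j−1} ⊗ h_1 + l_{j−2} ⊗ 1 ). -/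
open TensorProduct

/-- For the mod-2 Chow group `A` of a split quadric of odd dimension `n = 2d+1`, the first
Steenrod operation applied to the first factor of
`ρ_{2,j} = sym_{S_3}(h_0 ⊗ h_1 ⊗ l_j)` followed by the pullback `δ* : a⊗b⊗c ↦ (a·b)⊗c`
along the diagonal gives
`h_2 ⊗ l_j + l_{j−2} ⊗ 1 + (n+1−j)·(l_{j−1} ⊗ h_1 + l_{j−2} ⊗ 1)`. -/
theorem steenrod_one_on_rho_two (d : ℕ) (hd : 2 ≤ d)
    (A : Type) [CommRing A] [Algebra (ZMod 2) A]
    (h l : ℕ → A)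
    (hh0 : h 0 = 1)
    (hmulhh : ∀ a b : ℕ, a ≤ d → b ≤ d → h a * h b = if a + b ≤ d then h (a + b) else 0)
    (hmulhl : ∀ a j : ℕ, a ≤ d → j ≤ d → h a * l j = if a ≤ j then l (j - a) else 0)
    (hmulll : ∀ i j : ℕ, l i * l j = 0)
    (S1 : A →ₗ[ZMod 2] A)
    (hS1h : ∀ k : ℕ, k ≤ d →
      S1 (h k) = (k : ZMod 2) • (if k + 1 ≤ d then h (k + 1) else 0))
    (hS1l : ∀ j' : ℕ, j' ≤ d →
      S1 (l j') = (((2*d+1) + 1 - j' : ℕ) : ZMod 2) • (if 1 ≤ j' then l (j' - 1) else 0))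
    (j : ℕ) (hj2 : 2 ≤ j) (hjd : j ≤ d) :
    (TensorProduct.map (LinearMap.mul' (ZMod 2) A) LinearMap.id)
      ((TensorProduct.assoc (ZMod 2) A A A).symm
        ((TensorProduct.map S1 (LinearMap.id : A ⊗[ZMod 2] A →ₗ[ZMod 2] A ⊗[ZMod 2] A))
          (h 0 ⊗ₜ[ZMod 2] (h 1 ⊗ₜ[ZMod 2] l j) + h 0 ⊗ₜ[ZMod 2] (l j ⊗ₜ[ZMod 2] h 1) +
           h 1 ⊗ₜ[ZMod 2] (h 0 ⊗ₜ[ZMod 2] l j) + h 1 ⊗ₜ[ZMod 2] (l j ⊗ₜ[ZMod 2] h 0) +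
           l j ⊗ₜ[ZMod 2] (h 0 ⊗ₜ[ZMod 2] h 1) + l j ⊗ₜ[ZMod 2] (h 1 ⊗ₜ[ZMod 2] h 0)))) =
      h 2 ⊗ₜ[ZMod 2] l j + l (j - 2) ⊗ₜ[ZMod 2] (1 : A) +
        (((2*d+1) + 1 - j : ℕ) : ZMod 2) •
          (l (j - 1) ⊗ₜ[ZMod 2] h 1 + l (j - 2) ⊗ₜ[ZMod 2] (1 : A)) := by
  have h1d : 1 ≤ d := le_trans one_le_two hd
  have e1 : S1 (h 0) = 0 := by simp [hS1h 0 (Nat.zero_le d)]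
  have e1b : S1 (1 : A) = 0 := by rw [← hh0]; exact e1
  have e2 : S1 (h 1) = h 2 := by
    rw [hS1h 1 h1d]; simp [hd]
  have e3 : S1 (l j) = (((2*d+1)+1-j : ℕ) : ZMod 2) • l (j-1) := by
    rw [hS1l j hjd]; simp [le_trans one_le_two hj2]
  have p1 : h 2 * h 0 = h 2 := by rw [hh0, mul_one]
  have p2 : h 2 * l j = l (j - 2) := by
    rw [hmulhl 2 j hd hjd, if_pos hj2]
  have p3 : l (j-1) * h 0 = l (j-1) := by rw [hh0, mul_one]
  have p4 : l (j-1) * h 1 = l (j-2) := by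
    rw [mul_comm, hmulhl 1 (j-1) h1d (le_trans (Nat.sub_le j 1) hjd),
      if_pos (Nat.le_sub_one_of_lt (lt_of_lt_of_le one_lt_two hj2)), Nat.sub_sub]
  simp only [map_add, TensorProduct.map_tmul, LinearMap.id_coe, id_eq, e1, e1b, e2, e3,
    TensorProduct.zero_tmul, LinearMap.map_zero, LinearEquiv.map_zero, TensorProduct.smul_tmul',
    LinearMap.map_smul, LinearEquiv.map_smul,
    TensorProduct.assoc_symm_tmul, LinearMap.mul'_apply, p1, p2, p3, p4, smul_mul_assoc, hh0, mul_one, smul_add]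
  abel
end

section
/- Let 1 ≤ i ≤ d, i ≤ l ≤ d and l ≤ j ≤ d. Define ρ_{i,j} := sym_{S_{i+1}}( h_0 ⊗ h_1 ⊗ ⋯ ⊗ h_{i−1} ⊗ l_j ) ∈ A^{⊗(i+1)}, and let S^l : A → A be the linear map with S^l(h_k) = C(k,l)·h_{k+l} (interpreted as 0 if k + l > d) and S^l(l_j) = C(n+1−j, l)·l_{j−l}, binomial coefficients mod 2. Then (S^l ⊗ Id^{⊗ i})(ρ_{i,j}) = C(n+1−j, l)·( l_{j−l} ⊗ sym_{S_i}( h_0 ⊗ h_1 ⊗ ⋯ ⊗ h_{i−1} ) ). -/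
open PiTensorProduct TensorProduct

/-- Identity (4.8) of the paper: for `i ≤ L ≤ d` and `L ≤ j ≤ d`, applying the `L`-th
Steenrod operation `S^L` to the first tensor factor of
`ρ_{i,j} = sym_{S_{i+1}}(h_0 ⊗ ⋯ ⊗ h_{i−1} ⊗ l_j)` yields
`C(n+1−j, L)·(l_{j−L} ⊗ sym_{S_i}(h_0 ⊗ ⋯ ⊗ h_{i−1}))` in `A^{⊗(i+1)}` (`n = 2d+1`,
binomial coefficients mod 2, `sym_{S_i}` acting on the last `i` slots). -/
theorem higher_steenrod_on_rho (d : ℕ) (hd : 1 ≤ d)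
    (A : Type) [AddCommGroup A] [Module (ZMod 2) A]
    (h l : ℕ → A)
    (i L : ℕ) (hi1 : 1 ≤ i) (hid : i ≤ d) (hiL : i ≤ L) (hLd : L ≤ d)
    (SL : A →ₗ[ZMod 2] A)
    (hSLh : ∀ k : ℕ, k ≤ d →
      SL (h k) = (Nat.choose k L : ZMod 2) • (if k + L ≤ d then h (k + L) else 0))
    (hSLl : ∀ j' : ℕ, j' ≤ d →
      SL (l j') = (Nat.choose ((2*d+1) + 1 - j') L : ZMod 2) • l (j' - L))
    (j : ℕ) (hLj : L ≤ j) (hjd : j ≤ d) :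
    PiTensorProduct.map
        (fun k : Fin (i+1) => if k.val = 0 then SL else (LinearMap.id : A →ₗ[ZMod 2] A))
        (∑ s : Equiv.Perm (Fin (i+1)),
          ⨂ₜ[ZMod 2] k : Fin (i+1),
            (fun t : Fin (i+1) => if t.val = i then l j else h t.val) (s k)) =
      (Nat.choose ((2*d+1) + 1 - j) L : ZMod 2) •
        ∑ τ ∈ Finset.univ.filter (fun τ : Equiv.Perm (Fin (i+1)) => τ 0 = 0),
          ⨂ₜ[ZMod 2] k : Fin (i+1),
            (fun t : Fin (i+1) => if t.val = 0 then l (j - L) else h (t.val - 1)) (τ k) := by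
  classical
  set c : ZMod 2 := (Nat.choose ((2*d+1) + 1 - j) L : ZMod 2) with hc
  have key : ∀ s : Equiv.Perm (Fin (i+1)),
      PiTensorProduct.map
        (fun k : Fin (i+1) => if k.val = 0 then SL else (LinearMap.id : A →ₗ[ZMod 2] A))
        (⨂ₜ[ZMod 2] k : Fin (i+1),
          (fun t : Fin (i+1) => if t.val = i then l j else h t.val) (s k))
      = if (s 0).val = i then
          c • ⨂ₜ[ZMod 2] k : Fin (i+1),
            (if k = (0 : Fin (i+1)) then l (j - L) else h (s k).val)
        else 0 := by
    intro s
    rw [PiTensorProduct.map_tprod]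
    by_cases h0 : (s 0).val = i
    · rw [if_pos h0]
      have heq : (fun k : Fin (i+1) =>
          (if k.val = 0 then SL else (LinearMap.id : A →ₗ[ZMod 2] A))
            ((fun t : Fin (i+1) => if t.val = i then l j else h t.val) (s k)))
        = Function.update
            (fun k : Fin (i+1) => if k = (0 : Fin (i+1)) then l (j - L) else h (s k).val)
            0 (c • l (j - L)) := by
        funext k
        by_cases hk : k = (0 : Fin (i+1))
        · subst hk
          simp only [Function.update_self, Fin.val_zero, if_pos rfl, h0, if_pos rfl]
          exact hSLl j hjd
        · have hk' : k.val ≠ 0 := fun hh => hk (Fin.ext hh)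
          have hsk : (s k).val ≠ i := by
            intro hh
            exact hk (s.injective (Fin.ext (hh.trans h0.symm)))
          rw [Function.update_of_ne hk]
          simp [hk', hsk, hk]
      rw [heq, MultilinearMap.map_update_smul]
      congr 1
      congr 1
      funext k
      by_cases hk : k = (0 : Fin (i+1))
      · subst hk; simp
      · rw [Function.update_of_ne hk]
    · rw [if_neg h0]
      have hlt : (s 0).val < i := lt_of_le_of_ne (Nat.lt_succ_iff.mp (s 0).isLt) h0
      apply MultilinearMap.map_coord_zero (PiTensorProduct.tprod (ZMod 2)) (0 : Fin (i+1))
      have : (s 0).val ≠ i := h0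
      simp only [Fin.val_zero, if_pos rfl, if_neg this, if_pos trivial]
      rw [hSLh (s 0).val (le_trans (le_of_lt hlt) hid)]
      rw [Nat.choose_eq_zero_of_lt (lt_of_lt_of_le hlt hiL)]
      simp
  rw [map_sum]
  calc (∑ s : Equiv.Perm (Fin (i+1)),
        PiTensorProduct.map
          (fun k : Fin (i+1) => if k.val = 0 then SL else (LinearMap.id : A →ₗ[ZMod 2] A))
          (⨂ₜ[ZMod 2] k : Fin (i+1),
            (fun t : Fin (i+1) => if t.val = i then l j else h t.val) (s k)))
      = ∑ s ∈ Finset.univ.filter (fun s : Equiv.Perm (Fin (i+1)) => (s 0).val = i),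
          c • ⨂ₜ[ZMod 2] k : Fin (i+1),
            (if k = (0 : Fin (i+1)) then l (j - L) else h (s k).val) := by
        rw [Finset.sum_filter]
        exact Finset.sum_congr rfl fun s _ => key s
    _ = c • ∑ s ∈ Finset.univ.filter (fun s : Equiv.Perm (Fin (i+1)) => (s 0).val = i),
          ⨂ₜ[ZMod 2] k : Fin (i+1),
            (if k = (0 : Fin (i+1)) then l (j - L) else h (s k).val) := by
        rw [Finset.smul_sum]
    _ = c • ∑ τ ∈ Finset.univ.filter (fun τ : Equiv.Perm (Fin (i+1)) => τ 0 = 0),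
          ⨂ₜ[ZMod 2] k : Fin (i+1),
            (fun t : Fin (i+1) => if t.val = 0 then l (j - L) else h (t.val - 1)) (τ k) := by
        congr 1
        refine Finset.sum_nbij' (i := fun s => (Equiv.addRight (1 : Fin (i+1))) * s)
          (j := fun τ => (Equiv.addRight (1 : Fin (i+1)))⁻¹ * τ) ?_ ?_ ?_ ?_ ?_
        · intro s hs
          simp only [Finset.mem_filter, Finset.mem_univ, true_and] at hs ⊢
          have : s 0 = Fin.last i := Fin.ext (by simpa using hs)
          simp [Equiv.Perm.mul_apply, this, Fin.last_add_one]
        · intro τ hτ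
          simp only [Finset.mem_filter, Finset.mem_univ, true_and] at hτ ⊢
          have : ((Equiv.addRight (1 : Fin (i+1)))⁻¹ * τ) 0 = τ 0 - 1 := by
            rw [Equiv.Perm.mul_apply, Equiv.Perm.inv_def, Equiv.addRight_symm,
              Equiv.coe_addRight, sub_eq_add_neg]
          rw [this, hτ]
          have : (0 : Fin (i+1)) - 1 = Fin.last i := by
            rw [sub_eq_iff_eq_add, Fin.last_add_one]
          rw [this]
          simp [Fin.val_last]
        · intro s _; group
        · intro τ _; group
        · intro s hs
          simp only [Finset.mem_filter, Finset.mem_univ, true_and] at hs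
          have hs0 : s 0 = Fin.last i := Fin.ext (by simpa using hs)
          congr 1
          funext k
          by_cases hk : k = (0 : Fin (i+1))
          · subst hk
            simp [Equiv.Perm.mul_apply, hs0, Fin.last_add_one]
          · have hsk : (s k).val < i := by
              have hne : s k ≠ Fin.last i := fun hh => hk (s.injective (hh.trans hs0.symm))
              have := (s k).isLt
              have : (s k).val ≠ i := fun hh => hne (Fin.ext (by simpa using hh))
              omega
            have hval : ((Equiv.addRight (1 : Fin (i+1)) * s) k).val = (s k).val + 1 := by
              rw [Equiv.Perm.mul_apply, Equiv.coe_addRight, Fin.val_add_one]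
              rw [if_neg (fun hh => by rw [hh, Fin.val_last] at hsk; omega)]
            rw [if_neg hk]
            simp only [hval]
            simp
end

section
/- Let e > 2 with e ≤ d, let a : {e, …, d−e+1} → 𝔽₂ be arbitrary, and set π := 1 ⊗ l_{e−1} + l_{e−1} ⊗ 1 + Σ_{k=e}^{d−e+1} a_k·( h_k ⊗ l_{k+e−1} + l_{k+e−1} ⊗ h_k ) ∈ A ⊗ A. Let 0 ≤ j ≤ d with j ≠ e−2 and j ∉ {2e−2, 2e−1, …, d−1}. Set α := (1 ⊗ h_{e−2})·π ∈ A ⊗ A and β := sym_{S_3}(h_0 ⊗ h_1 ⊗ l_j) ∈ A^{⊗3}. Define the composition β ∘ α ∈ A^{⊗3} by bilinearity and the rule (u ⊗ v) ∘' (b ⊗ b' ⊗ b'') := deg(v·b)·( u ⊗ b' ⊗ b'' ) summed over decompositions. Then β ∘ α = 1 ⊗ ( 1 ⊗ l_j + l_j ⊗ 1 ). -/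
open TensorProduct

/-- The composition of correspondences: for `α = Σ u_i ⊗ v_i ∈ A ⊗ A` and
`β = Σ b_j ⊗ b'_j ⊗ b''_j ∈ A^{⊗3}`, `corrComp A deg α β = Σ deg(v_i·b_j)·(u_i ⊗ b'_j ⊗ b''_j)`. -/
noncomputable def corrComp (A : Type) [CommRing A] [Algebra (ZMod 2) A]
    (deg : A →ₗ[ZMod 2] ZMod 2) :
    (A ⊗[ZMod 2] A) →ₗ[ZMod 2]
      (A ⊗[ZMod 2] (A ⊗[ZMod 2] A)) →ₗ[ZMod 2] (A ⊗[ZMod 2] (A ⊗[ZMod 2] A)) :=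
  TensorProduct.lift (LinearMap.mk₂ (ZMod 2)
    (fun u v => TensorProduct.map
      ((deg.comp (LinearMap.mulLeft (ZMod 2) v)).smulRight u) LinearMap.id)
    (by intro u₁ u₂ v; ext b c
        simp [TensorProduct.map_tmul, smul_add, add_smul, tmul_add, add_tmul])
    (by intro c u v; ext b b'
        simp [TensorProduct.map_tmul, smul_tmul', smul_smul, mul_comm])
    (by intro u v₁ v₂; ext b c
        simp [TensorProduct.map_tmul, add_mul, mul_add, add_smul, tmul_add, add_tmul])
    (by intro c u v; ext b b'
        simp [TensorProduct.map_tmul, smul_tmul', smul_smul, mul_comm,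
          Algebra.smul_mul_assoc]))

/-- The key computation of Proposition 5.1 (case `i = 2`): for `π` the `1`-primordial cycle
of an anisotropic quadric with first Witt index `e > 2`, `α = (1 ⊗ h_{e−2})·π` and
`β = ρ_{2,j} = sym_{S_3}(h_0 ⊗ h_1 ⊗ l_j)`, if `j ≠ e−2` and `j ∉ {2e−2, …, d−1}` then
`β ∘ α = 1 ⊗ (1 ⊗ l_j + l_j ⊗ 1)`. -/
theorem rho_two_composed_with_primordial (d : ℕ) (hd : 3 ≤ d)
    (A : Type) [CommRing A] [Algebra (ZMod 2) A]
    (h l : ℕ → A)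
    (hh0 : h 0 = 1)
    (hmulhh : ∀ a b : ℕ, a ≤ d → b ≤ d → h a * h b = if a + b ≤ d then h (a + b) else 0)
    (hmulhl : ∀ a j : ℕ, a ≤ d → j ≤ d → h a * l j = if a ≤ j then l (j - a) else 0)
    (hmulll : ∀ i j : ℕ, l i * l j = 0)
    (deg : A →ₗ[ZMod 2] ZMod 2)
    (hdegl0 : deg (l 0) = 1)
    (hdegh : ∀ a : ℕ, a ≤ d → deg (h a) = 0)
    (hdegl : ∀ j : ℕ, 1 ≤ j → j ≤ d → deg (l j) = 0)
    (e : ℕ) (he : 2 < e) (hed : e ≤ d)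
    (a : ℕ → ZMod 2)
    (j : ℕ) (hjd : j ≤ d) (hj1 : j ≠ e - 2) (hj2 : ¬(2*e - 2 ≤ j ∧ j ≤ d - 1)) :
    corrComp A deg
      (((1 : A) ⊗ₜ[ZMod 2] h (e - 2)) *
        ((1 : A) ⊗ₜ[ZMod 2] l (e - 1) + l (e - 1) ⊗ₜ[ZMod 2] (1 : A) +
          ∑ k ∈ Finset.Icc e (d - e + 1),
            a k • (h k ⊗ₜ[ZMod 2] l (k + e - 1) + l (k + e - 1) ⊗ₜ[ZMod 2] h k)))
      (h 0 ⊗ₜ[ZMod 2] (h 1 ⊗ₜ[ZMod 2] l j) + h 0 ⊗ₜ[ZMod 2] (l j ⊗ₜ[ZMod 2] h 1) +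
       h 1 ⊗ₜ[ZMod 2] (h 0 ⊗ₜ[ZMod 2] l j) + h 1 ⊗ₜ[ZMod 2] (l j ⊗ₜ[ZMod 2] h 0) +
       l j ⊗ₜ[ZMod 2] (h 0 ⊗ₜ[ZMod 2] h 1) + l j ⊗ₜ[ZMod 2] (h 1 ⊗ₜ[ZMod 2] h 0)) =
    (1 : A) ⊗ₜ[ZMod 2] ((1 : A) ⊗ₜ[ZMod 2] l j + l j ⊗ₜ[ZMod 2] (1 : A)) := by
  have key : ∀ (u v b : A) (c : A ⊗[ZMod 2] A),
      corrComp A deg (u ⊗ₜ[ZMod 2] v) (b ⊗ₜ[ZMod 2] c) = deg (v * b) • (u ⊗ₜ[ZMod 2] c) := by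
    intro u v b c
    simp [corrComp, TensorProduct.smul_tmul']
  have key6 : ∀ u v : A, corrComp A deg (u ⊗ₜ[ZMod 2] v)
      (h 0 ⊗ₜ[ZMod 2] (h 1 ⊗ₜ[ZMod 2] l j) + h 0 ⊗ₜ[ZMod 2] (l j ⊗ₜ[ZMod 2] h 1) +
       h 1 ⊗ₜ[ZMod 2] (h 0 ⊗ₜ[ZMod 2] l j) + h 1 ⊗ₜ[ZMod 2] (l j ⊗ₜ[ZMod 2] h 0) +
       l j ⊗ₜ[ZMod 2] (h 0 ⊗ₜ[ZMod 2] h 1) + l j ⊗ₜ[ZMod 2] (h 1 ⊗ₜ[ZMod 2] h 0)) =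
      deg (v * h 0) • (u ⊗ₜ[ZMod 2] (h 1 ⊗ₜ[ZMod 2] l j)) +
      deg (v * h 0) • (u ⊗ₜ[ZMod 2] (l j ⊗ₜ[ZMod 2] h 1)) +
      deg (v * h 1) • (u ⊗ₜ[ZMod 2] (h 0 ⊗ₜ[ZMod 2] l j)) +
      deg (v * h 1) • (u ⊗ₜ[ZMod 2] (l j ⊗ₜ[ZMod 2] h 0)) +
      deg (v * l j) • (u ⊗ₜ[ZMod 2] (h 0 ⊗ₜ[ZMod 2] h 1)) +
      deg (v * l j) • (u ⊗ₜ[ZMod 2] (h 1 ⊗ₜ[ZMod 2] h 0)) := by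
    intro u v
    simp only [map_add, key]
  have split : ∀ (x y : A ⊗[ZMod 2] A) (B : A ⊗[ZMod 2] (A ⊗[ZMod 2] A)),
      corrComp A deg (x + y) B = corrComp A deg x B + corrComp A deg y B := by
    intro x y B; rw [map_add (corrComp A deg)]; rfl
  have hprod : ((1 : A) ⊗ₜ[ZMod 2] h (e - 2)) *
        ((1 : A) ⊗ₜ[ZMod 2] l (e - 1) + l (e - 1) ⊗ₜ[ZMod 2] (1 : A) +
          ∑ k ∈ Finset.Icc e (d - e + 1),
            a k • (h k ⊗ₜ[ZMod 2] l (k + e - 1) + l (k + e - 1) ⊗ₜ[ZMod 2] h k)) =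
      (1 : A) ⊗ₜ[ZMod 2] l 1 + l (e - 1) ⊗ₜ[ZMod 2] h (e - 2) +
        ∑ k ∈ Finset.Icc e (d - e + 1),
          a k • (h k ⊗ₜ[ZMod 2] l (k + 1) + l (k + e - 1) ⊗ₜ[ZMod 2] h (k + e - 2)) := by
    rw [mul_add, mul_add, Finset.mul_sum]
    congr 1
    · congr 1
      · rw [Algebra.TensorProduct.tmul_mul_tmul, one_mul,
          hmulhl (e - 2) (e - 1) (by omega) (by omega), if_pos (by omega)]
        have h1 : e - 1 - (e - 2) = 1 := by omega
        rw [h1]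
      · rw [Algebra.TensorProduct.tmul_mul_tmul, one_mul, mul_one]
    · refine Finset.sum_congr rfl (fun k hk => ?_)
      rw [Finset.mem_Icc] at hk
      rw [mul_smul_comm, mul_add, Algebra.TensorProduct.tmul_mul_tmul,
        Algebra.TensorProduct.tmul_mul_tmul, one_mul, one_mul,
        hmulhl (e - 2) (k + e - 1) (by omega) (by omega), if_pos (by omega),
        hmulhh (e - 2) k (by omega) (by omega), if_pos (by omega)]
      have h1 : k + e - 1 - (e - 2) = k + 1 := by omega
      have h2 : e - 2 + k = k + e - 2 := by omega
      rw [h1, h2]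
  rw [hprod, split, split]
  have hsum : ∀ B : A ⊗[ZMod 2] (A ⊗[ZMod 2] A),
      corrComp A deg (∑ k ∈ Finset.Icc e (d - e + 1),
          a k • (h k ⊗ₜ[ZMod 2] l (k + 1) + l (k + e - 1) ⊗ₜ[ZMod 2] h (k + e - 2))) B =
      ∑ k ∈ Finset.Icc e (d - e + 1),
        a k • corrComp A deg
          (h k ⊗ₜ[ZMod 2] l (k + 1) + l (k + e - 1) ⊗ₜ[ZMod 2] h (k + e - 2)) B := by
    intro B
    rw [map_sum (corrComp A deg)]
    simp only [map_smul, LinearMap.sum_apply, LinearMap.smul_apply]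
  rw [hsum]
  have piece1 : corrComp A deg ((1 : A) ⊗ₜ[ZMod 2] l 1)
      (h 0 ⊗ₜ[ZMod 2] (h 1 ⊗ₜ[ZMod 2] l j) + h 0 ⊗ₜ[ZMod 2] (l j ⊗ₜ[ZMod 2] h 1) +
       h 1 ⊗ₜ[ZMod 2] (h 0 ⊗ₜ[ZMod 2] l j) + h 1 ⊗ₜ[ZMod 2] (l j ⊗ₜ[ZMod 2] h 0) +
       l j ⊗ₜ[ZMod 2] (h 0 ⊗ₜ[ZMod 2] h 1) + l j ⊗ₜ[ZMod 2] (h 1 ⊗ₜ[ZMod 2] h 0)) =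
      (1 : A) ⊗ₜ[ZMod 2] ((1 : A) ⊗ₜ[ZMod 2] l j + l j ⊗ₜ[ZMod 2] (1 : A)) := by
    rw [key6]
    have d1 : deg (l 1 * h 0) = 0 := by
      rw [hh0, mul_one]; exact hdegl 1 le_rfl (by omega)
    have d2 : deg (l 1 * h 1) = 1 := by
      rw [mul_comm, hmulhl 1 1 (by omega) (by omega), if_pos le_rfl]
      simpa using hdegl0
    have d3 : deg (l 1 * l j) = 0 := by rw [hmulll, map_zero]
    rw [d1, d2, d3, hh0]
    simp [TensorProduct.tmul_add]
  have piece2 : corrComp A deg (l (e - 1) ⊗ₜ[ZMod 2] h (e - 2))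
      (h 0 ⊗ₜ[ZMod 2] (h 1 ⊗ₜ[ZMod 2] l j) + h 0 ⊗ₜ[ZMod 2] (l j ⊗ₜ[ZMod 2] h 1) +
       h 1 ⊗ₜ[ZMod 2] (h 0 ⊗ₜ[ZMod 2] l j) + h 1 ⊗ₜ[ZMod 2] (l j ⊗ₜ[ZMod 2] h 0) +
       l j ⊗ₜ[ZMod 2] (h 0 ⊗ₜ[ZMod 2] h 1) + l j ⊗ₜ[ZMod 2] (h 1 ⊗ₜ[ZMod 2] h 0)) = 0 := by
    rw [key6]
    have d1 : deg (h (e - 2) * h 0) = 0 := by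
      rw [hh0, mul_one]; exact hdegh (e - 2) (by omega)
    have d2 : deg (h (e - 2) * h 1) = 0 := by
      rw [hmulhh (e - 2) 1 (by omega) (by omega), if_pos (by omega)]
      exact hdegh (e - 2 + 1) (by omega)
    have d3 : deg (h (e - 2) * l j) = 0 := by
      rw [hmulhl (e - 2) j (by omega) hjd]
      split_ifs with hle
      · exact hdegl (j - (e - 2)) (by omega) (by omega)
      · exact map_zero deg
    rw [d1, d2, d3]
    simp
  have piece3 : ∀ k ∈ Finset.Icc e (d - e + 1),
      corrComp A deg (h k ⊗ₜ[ZMod 2] l (k + 1) + l (k + e - 1) ⊗ₜ[ZMod 2] h (k + e - 2))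
      (h 0 ⊗ₜ[ZMod 2] (h 1 ⊗ₜ[ZMod 2] l j) + h 0 ⊗ₜ[ZMod 2] (l j ⊗ₜ[ZMod 2] h 1) +
       h 1 ⊗ₜ[ZMod 2] (h 0 ⊗ₜ[ZMod 2] l j) + h 1 ⊗ₜ[ZMod 2] (l j ⊗ₜ[ZMod 2] h 0) +
       l j ⊗ₜ[ZMod 2] (h 0 ⊗ₜ[ZMod 2] h 1) + l j ⊗ₜ[ZMod 2] (h 1 ⊗ₜ[ZMod 2] h 0)) = 0 := by
    intro k hk
    rw [Finset.mem_Icc] at hk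
    rw [split, key6, key6]
    have d1 : deg (l (k + 1) * h 0) = 0 := by
      rw [hh0, mul_one]; exact hdegl (k + 1) (by omega) (by omega)
    have d2 : deg (l (k + 1) * h 1) = 0 := by
      rw [mul_comm, hmulhl 1 (k + 1) (by omega) (by omega), if_pos (by omega)]
      exact hdegl (k + 1 - 1) (by omega) (by omega)
    have d3 : deg (l (k + 1) * l j) = 0 := by rw [hmulll, map_zero]
    have d4 : deg (h (k + e - 2) * h 0) = 0 := by
      rw [hh0, mul_one]; exact hdegh (k + e - 2) (by omega)
    have d5 : deg (h (k + e - 2) * h 1) = 0 := by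
      rw [hmulhh (k + e - 2) 1 (by omega) (by omega), if_pos (by omega)]
      exact hdegh (k + e - 2 + 1) (by omega)
    have d6 : deg (h (k + e - 2) * l j) = 0 := by
      rw [hmulhl (k + e - 2) j (by omega) hjd]
      split_ifs with hle
      · exact hdegl (j - (k + e - 2)) (by omega) (by omega)
      · exact map_zero deg
    rw [d1, d2, d3, d4, d5, d6]
    simp
  rw [piece1, piece2, Finset.sum_congr rfl (fun k hk => by rw [piece3 k hk])]
  simp
end
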